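/- In any Lie ring, for every n ≥ 1 the identity [Σ_{k=0}^{⌊(n+1)/2⌋} (−1)^{n+1} α_{n+1−k,k} [C_{2n+1−k}, C_{n+k−1}], a] = [Σ_{i=0}^{n} Σ_{j=0}^{⌊i/2⌋} (−1)^{i+1} α_{i−j,j} [[C_{n+i−j}, C_{n+j−1}], C_{n−i}], b] holds, where Cₙ is the Engel bracket of a by b, α_{0,0} = 1, and α_{i,j} = 2·C(i+j−1,j) + C(i+j−2,j−1) − C(i+j−2,j−2) − 2·C(i+j−1,j−2) for (i,j) ≠ (0,0). -/

import Mathlib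

/-- The Engel bracket: `engel a b n = [a,_n b] = Cₙ`. -/
def engel {L : Type*} [LieRing L] (a b : L) : ℕ → L
  | 0 => a
  | n + 1 => ⁅engel a b n, b⁆

/-- Binomial coefficient `C(n,k)` on integers, taken to be `0` when `k < 0` or `k > n`. -/
def ch (n k : ℤ) : ℤ := if k < 0 ∨ n < k then 0 else (n.toNat.choose k.toNat : ℤ)

/-- The coefficients `α_{i,j}`. -/
def alpha (i j : ℕ) : ℤ :=
  if i = 0 ∧ j = 0 then 1
  else 2 * ch ((i : ℤ) + j - 1) j + ch ((i : ℤ) + j - 2) ((j : ℤ) - 1)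
    - ch ((i : ℤ) + j - 2) ((j : ℤ) - 2) - 2 * ch ((i : ℤ) + j - 1) ((j : ℤ) - 2)

/-!
Put `V_i = Σ_{j ≤ i/2} α_{i-j,j} [C_{n+i-j}, C_{n+j-1}]` and `U_i = (-1)^{i+1} V_i`. The left side
is `-[U_{n+1}, a]` and the right side is `Σ_{i ≤ n} [[U_i, C_{n-i}], b]`. As `ad b` is a derivation
and `C_{k+1} = [C_k, b]`, the right side telescopes to
`Σ_{i ≤ n} [[U_i, b] + U_{i+1}, C_{n-i}] + [U_0, C_{n+1}] - [U_{n+1}, a]`.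
Pascal's rule for `α` gives `[V_i, b] = V_{i+1}` for `i ≥ 2`: for even `i` the extra top term is
`[C_m, C_m] = 0`, for odd `i` it is absorbed using `α_{m,m+1} = 0`. So only `i = 0, 1` survive,
and what remains is the Jacobi identity for `C_{n+1}, C_n, C_{n-1}`.
-/

open Finset

lemma ch_pascal (n k : ℤ) (hn : 1 ≤ n) : ch n k = ch (n - 1) k + ch (n - 1) (k - 1) := by
  unfold ch
  split_ifs <;> try omega
  · obtain ⟨m, rfl⟩ : ∃ m : ℕ, k = m + 1 := ⟨(k - 1).toNat, by omega⟩
    obtain rfl : n = m + 1 := by omega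
    simp
  · obtain rfl : k = 0 := by omega
    simp
  · obtain ⟨m, rfl⟩ : ∃ m : ℕ, n = m + 1 := ⟨(n - 1).toNat, by omega⟩
    obtain ⟨l, rfl⟩ : ∃ l : ℕ, k = l + 1 := ⟨(k - 1).toNat, by omega⟩
    simp [Nat.choose_succ_succ, add_comm]

lemma ch_symm (n k : ℤ) (hk : 0 ≤ k) (hkn : k ≤ n) : ch n k = ch n (n - k) := by
  unfold ch
  rw [if_neg (by omega), if_neg (by omega), show (n - k).toNat = n.toNat - k.toNat by omega,
    Nat.choose_symm (by omega)]

lemma alpha_pascal (p q : ℕ) (hp : 1 ≤ p) (hq : 1 ≤ q) (hpq : 3 ≤ p + q) :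
    alpha p q = alpha (p - 1) q + alpha p (q - 1) := by
  unfold alpha
  rw [if_neg (by omega), if_neg (by omega), if_neg (by omega)]
  push_cast [hp, hq]
  rw [ch_pascal ((p : ℤ) + q - 1) q (by omega),
    ch_pascal ((p : ℤ) + q - 2) ((q : ℤ) - 1) (by omega),
    ch_pascal ((p : ℤ) + q - 2) ((q : ℤ) - 2) (by omega),
    ch_pascal ((p : ℤ) + q - 1) ((q : ℤ) - 2) (by omega)]
  ring_nf

lemma alpha_self_succ (p : ℕ) (hp : 1 ≤ p) : alpha p (p + 1) = 0 := by
  unfold alpha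
  rw [if_neg (by omega)]
  push_cast
  rw [ch_symm (p + (p + 1) - 1) (p + 1) (by omega) (by omega),
    ch_symm (p + (p + 1) - 2) (p + 1 - 1) (by omega) (by omega)]
  ring_nf

lemma alpha_zero_right (p : ℕ) (hp : 1 ≤ p) : alpha p 0 = 2 := by
  simp [alpha, ch, show p ≠ 0 by omega]

lemma sum_alpha_smul_add_succ {M : Type*} [AddCommGroup M] (S : ℕ → M) {i k : ℕ} (hi : 2 ≤ i)
    (hk : k ≤ i) :
    ∑ j ∈ range (k + 1), alpha (i - j) j • (S j + S (j + 1)) =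
      ∑ j ∈ range (k + 1), alpha (i + 1 - j) j • S j + alpha (i - k) k • S (k + 1) := by
  induction k with
  | zero => simp [alpha_zero_right i (by omega), alpha_zero_right (i + 1) (by omega)]
  | succ k ih =>
    have hpascal :
        alpha (i + 1 - (k + 1)) (k + 1) = alpha (i - (k + 1)) (k + 1) + alpha (i - k) k := by
      rw [show i + 1 - (k + 1) = i - k by omega, show i - (k + 1) = i - k - 1 by omega]
      exact alpha_pascal (i - k) (k + 1) (by omega) (by omega) (by omega)
    rw [sum_range_succ, ih (by omega), sum_range_succ _ (k + 1), hpascal, add_smul, smul_add]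
    abel

section Engel

variable {L : Type*} [LieRing L] (a b : L)

lemma leibniz_lie_right (x y z : L) : ⁅⁅x, y⁆, z⁆ = ⁅⁅x, z⁆, y⁆ + ⁅x, ⁅y, z⁆⁆ := by
  rw [lie_lie, sub_eq_add_neg, lie_skew, add_comm]

lemma lie_engel_lie_engel (p q : ℕ) :
    ⁅⁅engel a b p, engel a b q⁆, b⁆ =
      ⁅engel a b (p + 1), engel a b q⁆ + ⁅engel a b p, engel a b (q + 1)⁆ :=
  leibniz_lie_right _ _ _

def alphaEngelSum (n i : ℕ) : L :=
  ∑ j ∈ range (i / 2 + 1), alpha (i - j) j • ⁅engel a b (n + i - j), engel a b (n + j - 1)⁆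

lemma alphaEngelSum_lie {n i : ℕ} (hn : 1 ≤ n) (hi : 2 ≤ i) :
    ⁅alphaEngelSum a b n i, b⁆ = alphaEngelSum a b n (i + 1) := by
  set S : ℕ → L := fun j => ⁅engel a b (n + (i + 1) - j), engel a b (n + j - 1)⁆ with hS
  have hlie : ⁅alphaEngelSum a b n i, b⁆ =
      ∑ j ∈ range (i / 2 + 1), alpha (i - j) j • (S j + S (j + 1)) := by
    rw [alphaEngelSum, sum_lie]
    refine sum_congr rfl fun j hj => ?_
    have := mem_range.mp hj
    rw [smul_lie, lie_engel_lie_engel]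
    congr 4 <;> omega
  rw [hlie, sum_alpha_smul_add_succ S hi (Nat.div_le_self i 2), alphaEngelSum]
  obtain ⟨m, rfl | rfl⟩ := Nat.even_or_odd' i
  · have hdiag : S (m + 1) = 0 := by
      simp only [hS, show n + (2 * m + 1) - (m + 1) = n + (m + 1) - 1 by omega, lie_self]
    rw [show 2 * m / 2 = m by omega, show (2 * m + 1) / 2 = m by omega, hdiag, smul_zero,
      add_zero]
  · have hm : 1 ≤ m := by omega
    have hcoef : alpha (2 * m + 1 - m) m = alpha (m + 1) (m + 1) := by
      rw [alpha_pascal (m + 1) (m + 1) (by omega) (by omega) (by omega), Nat.add_sub_cancel,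
        alpha_self_succ m hm, zero_add]
      congr 1; omega
    rw [show (2 * m + 1) / 2 = m by omega, show (2 * m + 1 + 1) / 2 = m + 1 by omega, hcoef,
      sum_range_succ _ (m + 1), show 2 * m + 1 + 1 - (m + 1) = m + 1 by omega]

lemma alphaEngelSum_zero (n : ℕ) :
    alphaEngelSum a b n 0 = ⁅engel a b n, engel a b (n - 1)⁆ := by
  simp [alphaEngelSum, show alpha 0 0 = 1 from rfl]

lemma alphaEngelSum_one (n : ℕ) :
    alphaEngelSum a b n 1 = (2 : ℤ) • ⁅engel a b (n + 1), engel a b (n - 1)⁆ := by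
  simp [alphaEngelSum, alpha_zero_right 1 le_rfl]

lemma alphaEngelSum_two (n : ℕ) :
    alphaEngelSum a b n 2 =
      (2 : ℤ) • ⁅engel a b (n + 2), engel a b (n - 1)⁆
        + (3 : ℤ) • ⁅engel a b (n + 1), engel a b n⁆ := by
  simp [alphaEngelSum, sum_range_succ, alpha_zero_right 2 (by norm_num),
    show alpha 1 1 = 3 by decide, show n + 2 - 1 = n + 1 by omega]

lemma alphaEngelSum_zero_lie {n : ℕ} (hn : 1 ≤ n) :
    ⁅alphaEngelSum a b n 0, b⁆ =
      alphaEngelSum a b n 1 - ⁅engel a b (n + 1), engel a b (n - 1)⁆ := by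
  rw [alphaEngelSum_zero, alphaEngelSum_one, lie_engel_lie_engel, Nat.sub_add_cancel hn, lie_self]
  module

lemma alphaEngelSum_one_lie {n : ℕ} (hn : 1 ≤ n) :
    ⁅alphaEngelSum a b n 1, b⁆ =
      alphaEngelSum a b n 2 - ⁅engel a b (n + 1), engel a b n⁆ := by
  rw [alphaEngelSum_one, alphaEngelSum_two, smul_lie, lie_engel_lie_engel, Nat.sub_add_cancel hn]
  module

lemma sum_range_lie_engel_lie (U : ℕ → L) (n : ℕ) :
    ∑ i ∈ range (n + 1), ⁅⁅U i, engel a b (n - i)⁆, b⁆ =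
      ∑ i ∈ range (n + 1), ⁅⁅U i, b⁆ + U (i + 1), engel a b (n - i)⁆
        + ⁅U 0, engel a b (n + 1)⁆ - ⁅U (n + 1), a⁆ := by
  rw [← Nat.sum_antidiagonal_eq_sum_range_succ fun i k => ⁅⁅U i, engel a b k⁆, b⁆,
    ← Nat.sum_antidiagonal_eq_sum_range_succ fun i k => ⁅⁅U i, b⁆ + U (i + 1), engel a b k⁆]
  have hshift : ∑ p ∈ antidiagonal n, ⁅U p.1, ⁅engel a b p.2, b⁆⁆ =
      ⁅U 0, engel a b (n + 1)⁆ + ∑ p ∈ antidiagonal n, ⁅U (p.1 + 1), engel a b p.2⁆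
        - ⁅U (n + 1), a⁆ := by
    rw [eq_sub_iff_add_eq']
    exact (Nat.sum_antidiagonal_succ' (f := fun p => ⁅U p.1, engel a b p.2⁆)).symm.trans
      Nat.sum_antidiagonal_succ
  simp only [leibniz_lie_right _ _ b, add_lie, sum_add_distrib, hshift]
  abel

lemma sum_range_lie_alphaEngelSum_defect {n : ℕ} (hn : 1 ≤ n) :
    ∑ i ∈ range (n + 1), ⁅⁅(-1 : ℤ) ^ (i + 1) • alphaEngelSum a b n i, b⁆
        + (-1 : ℤ) ^ (i + 1 + 1) • alphaEngelSum a b n (i + 1), engel a b (n - i)⁆ =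
      ⁅⁅engel a b (n + 1), engel a b (n - 1)⁆, engel a b n⁆
        - ⁅⁅engel a b (n + 1), engel a b n⁆, engel a b (n - 1)⁆ := by
  have hvanish : ∀ i, 2 ≤ i → ⁅(-1 : ℤ) ^ (i + 1) • alphaEngelSum a b n i, b⁆
      + (-1 : ℤ) ^ (i + 1 + 1) • alphaEngelSum a b n (i + 1) = 0 := fun i hi => by
    rw [smul_lie, alphaEngelSum_lie a b hn hi, pow_succ _ (i + 1), mul_neg_one, neg_smul,
      add_neg_cancel]
  rw [sum_eq_add_of_mem 0 1 (by simp) (by simp; omega) zero_ne_one fun i _ hi =>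
    by rw [hvanish i (by omega), zero_lie]]
  simp only [smul_lie, alphaEngelSum_zero_lie a b hn, alphaEngelSum_one_lie a b hn, zero_add,
    Nat.reduceAdd, Nat.sub_zero, add_lie, sub_lie]
  module

end Engel

theorem generalized_three_a_identity {L : Type*} [LieRing L] (a b : L) (n : ℕ) (hn : 1 ≤ n) :
    ⁅∑ k ∈ Finset.range ((n + 1) / 2 + 1),
        ((-1 : ℤ) ^ (n + 1) * alpha (n + 1 - k) k) •
          ⁅engel a b (2 * n + 1 - k), engel a b (n + k - 1)⁆, a⁆ =
    ⁅∑ i ∈ Finset.range (n + 1), ∑ j ∈ Finset.range (i / 2 + 1),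
        ((-1 : ℤ) ^ (i + 1) * alpha (i - j) j) •
          ⁅⁅engel a b (n + i - j), engel a b (n + j - 1)⁆, engel a b (n - i)⁆, b⁆ := by
  set U : ℕ → L := fun i => (-1 : ℤ) ^ (i + 1) • alphaEngelSum a b n i with hU
  have hLHS : ∑ k ∈ range ((n + 1) / 2 + 1), ((-1 : ℤ) ^ (n + 1) * alpha (n + 1 - k) k) •
      ⁅engel a b (2 * n + 1 - k), engel a b (n + k - 1)⁆ = -U (n + 1) := by
    simp only [hU, alphaEngelSum, smul_sum, ← sum_neg_distrib]
    refine sum_congr rfl fun k _ => ?_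
    rw [pow_succ _ (n + 1), smul_smul, show n + (n + 1) - k = 2 * n + 1 - k by omega]
    module
  have hRHS : ∀ i, ∑ j ∈ range (i / 2 + 1), ((-1 : ℤ) ^ (i + 1) * alpha (i - j) j) •
      ⁅⁅engel a b (n + i - j), engel a b (n + j - 1)⁆, engel a b (n - i)⁆ =
        ⁅U i, engel a b (n - i)⁆ := fun i => by
    simp only [hU, alphaEngelSum, smul_sum, sum_lie, smul_lie, mul_smul]
  rw [hLHS, sum_congr rfl fun i _ => hRHS i, sum_lie, sum_range_lie_engel_lie,
    sum_range_lie_alphaEngelSum_defect a b hn]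
  simp only [hU, zero_add, pow_one, neg_one_smul, alphaEngelSum_zero, neg_lie]
  rw [leibniz_lie_right (engel a b (n + 1)) (engel a b n) (engel a b (n - 1)),
    ← lie_skew (engel a b (n + 1)) ⁅engel a b n, engel a b (n - 1)⁆]
  abel
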